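/- arXiv:1811.08755 — 3 statements merged into one kernel-verified Lean document; each statement's English description precedes it below -/
import Mathlib

section
/- Let q be a complex number and let N, m, k be natural numbers with k ≤ m ≤ N. Then ∑_{l=k}^{N} (-1)^{l-k} · C(N-m+k, l) · C(l, k) · ∏_{j=k+1}^{l} (1 + q/j) = ((-1)^{N-m}/(N-m)!) · ∏_{j=0}^{N-m-1} (q - j), where C(a, b) denotes the binomial coefficient (with C(a, b) = 0 if b > a) and empty products equal 1. (Lemma 3.3 of the paper.) -/
/-!
Write `n = N - m` and `l = k + i`; the terms with `l > n + k` vanish. With `binom` the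
generalized binomial coefficient `Ring.choose`,
`C(k + i, k) ∏_{j=k+1}^{k+i} (1 + q/j) = binom(q + k + i, i)` and
`(-1)^i binom(q + k + i, i) = binom(-q - k - 1, i)`, so the sum is the Chu–Vandermonde convolution
`∑ᵢ C(n + k, n - i) binom(-q - k - 1, i) = binom(n - 1 - q, n) = (-1)^n binom(q, n)`.
-/

open Finset Polynomial

variable {K : Type*} [Field K] [CharZero K]

theorem Ring.choose_eq_prod_range_div_factorial (a : K) (n : ℕ) :
    Ring.choose a n = (∏ j ∈ range n, (a - j)) / n.factorial := by
  rw [Ring.choose_eq_smul, ← aeval_eq_smeval, aeval_def, eval₂_eq_eval_map, descPochhammer_map,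
    descPochhammer_eval_eq_prod_range, smul_eq_mul, inv_mul_eq_div]

theorem Ring.choose_neg_eq_neg_one_pow_mul (r : K) (n : ℕ) :
    Ring.choose (-r) n = (-1) ^ n * Ring.choose (r + n - 1) n := by
  rw [Ring.choose_neg, Units.smul_def, zsmul_eq_mul, Int.cast_negOnePow_natCast]

theorem Ring.choose_succ_succ_mul (x : K) (i : ℕ) :
    Ring.choose (x + 1) (i + 1) * (i + 1) = (x + 1) * Ring.choose x i := by
  have := Ring.choose_smul_choose (x + 1) (Nat.le_add_left 1 i)
  simp only [Nat.choose_one_right, nsmul_eq_mul, Ring.choose_one_right, Nat.add_sub_cancel] at this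
  push_cast at this
  rw [add_sub_cancel_right] at this
  linear_combination this

theorem natChoose_mul_prod_Icc_one_add_div (q : K) (k i : ℕ) :
    (Nat.choose (k + i) k : K) * ∏ j ∈ Icc (k + 1) (k + i), (1 + q / j) =
      Ring.choose (q + k + i) i := by
  induction i with
  | zero => simp
  | succ i ih =>
    have hchoose : ((k + i).choose k * (k + i + 1) : K) = (k + i + 1).choose k * (i + 1) := by
      exact_mod_cast (Nat.choose_mul_succ_eq (k + i) k).trans (by congr 1; omega)
    have hpos : (k + i + 1 : K) ≠ 0 := by exact_mod_cast (k + i).succ_ne_zero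
    have hi : (i + 1 : K) ≠ 0 := by exact_mod_cast i.succ_ne_zero
    rw [← add_assoc k i 1, prod_Icc_succ_top (by omega), ← mul_left_inj' hi, Nat.cast_add_one i,
      ← add_assoc, Ring.choose_succ_succ_mul, ← ih]
    push_cast
    field_simp
    linear_combination -(q + k + i + 1) * (∏ j ∈ Icc (k + 1) (k + i), (1 + q / j)) * hchoose

theorem sum_neg_one_pow_mul_choose_mul_prod_Icc_one_add_div (q : K) (n k : ℕ) :
    ∑ i ∈ range (n + 1), (-1) ^ i * (Nat.choose (n + k) (k + i) : K) *
        (Nat.choose (k + i) k : K) * ∏ j ∈ Icc (k + 1) (k + i), (1 + q / j) =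
      (-1) ^ n * Ring.choose q n := by
  calc _ = ∑ i ∈ range (n + 1),
        Ring.choose (-(q + k + 1)) i * Ring.choose ((n + k : ℕ) : K) (n - i) := by
        refine sum_congr rfl fun i hi => ?_
        rw [Ring.choose_natCast, Ring.choose_neg_eq_neg_one_pow_mul, mul_assoc,
          natChoose_mul_prod_Icc_one_add_div,
          Nat.choose_symm_of_eq_add (show n + k = k + i + (n - i) by grind)]
        ring_nf
    _ = Ring.choose (-(q + k + 1) + (n + k : ℕ)) n := by
        rw [Ring.add_choose_eq n (Commute.all _ _), Nat.sum_antidiagonal_eq_sum_range_succ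
          (fun a b => Ring.choose (-(q + k + 1)) a * Ring.choose ((n + k : ℕ) : K) b)]
    _ = (-1) ^ n * Ring.choose q n := by
        rw [show -(q + k + 1) + ((n + k : ℕ) : K) = -(q - n + 1) by push_cast; ring,
          Ring.choose_neg_eq_neg_one_pow_mul, show q - n + 1 + n - 1 = q by ring]

/-- **Lemma 3.3.** For `k ≤ m ≤ N` and `q ∈ ℂ`,
`∑_{l=k}^{N} (-1)^{l-k} C(N-m+k, l) C(l, k) ∏_{j=k+1}^{l} (1 + q/j)
  = ((-1)^{N-m}/(N-m)!) ∏_{j=0}^{N-m-1} (q - j)`. -/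
theorem stmt0 (q : ℂ) (N m k : ℕ) (hk : k ≤ m) (hm : m ≤ N) :
    ∑ l ∈ Finset.Icc k N, (-1 : ℂ) ^ (l - k) * (Nat.choose (N - m + k) l : ℂ) *
        (Nat.choose l k : ℂ) * ∏ j ∈ Finset.Icc (k + 1) l, (1 + q / (j : ℂ))
      = ((-1 : ℂ) ^ (N - m) / (Nat.factorial (N - m) : ℂ)) *
        ∏ j ∈ Finset.range (N - m), (q - (j : ℂ)) := by
  have hvanish : ∀ l ∈ Icc k N, l ∉ Icc k (N - m + k) →
      (-1 : ℂ) ^ (l - k) * (Nat.choose (N - m + k) l : ℂ) * (Nat.choose l k : ℂ) *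
        ∏ j ∈ Icc (k + 1) l, (1 + q / (j : ℂ)) = 0 := by
    intro l hl hl'
    rw [Nat.choose_eq_zero_of_lt (by grind)]
    simp
  rw [← sum_subset (Icc_subset_Icc_right (by omega)) hvanish, ← Ico_add_one_right_eq_Icc,
    sum_Ico_eq_sum_range, Nat.add_right_comm, Nat.add_sub_cancel]
  simp only [Nat.add_sub_cancel_left]
  rw [sum_neg_one_pow_mul_choose_mul_prod_Icc_one_add_div, Ring.choose_eq_prod_range_div_factorial]
  ring
end

section
/- Let κ ∈ ℂ with κ ≠ 1, and let N, m, k be natural numbers with k ≤ m ≤ N. Then ∑_{l=k}^{N} (-1)^{l-k} · C(N-m+k, l) · C(l, k) · ∏_{j=k+1}^{l} ((j(κ-1)+1)/(j(κ-1))) = ∏_{j=1}^{N-m} ((j(κ-1)-κ)/(j(κ-1))). (This is Lemma 3.3 of the paper specialized at q = 1/(κ-1), in the form in which it is applied in the proof of Lemma 3.4.) -/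
/-!
Put `x = (κ - 1)⁻¹` and `n = N - m`; the factors become `(x + j) / j` and `(j - 1 - x) / j`.
Multiplied by `n!`, the summand with `l = k + i` is `C(n, i) · (u)ᵢ · (v)ₙ₋ᵢ` in falling
factorials, with `u = -x - k - 1` and `v = n + k`, so the sum is `(u + v)ₙ = (n - 1 - x)ₙ`
by the Chu–Vandermonde identity, which is `n!` times the right-hand side.
-/

open Finset Polynomial Nat

theorem descPochhammer_eval_add {R : Type*} [CommRing R] (r s : R) (n : ℕ) :
    (descPochhammer R n).eval (r + s) = ∑ i ∈ range (n + 1),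
      n.choose i * ((descPochhammer R i).eval r * (descPochhammer R (n - i)).eval s) := by
  have key := Ring.descPochhammer_smeval_add (r := r) (s := s) n (Commute.all r s)
  simp only [← aeval_eq_smeval, aeval_def, eval₂_eq_eval_map, descPochhammer_map] at key
  rw [key, Nat.sum_antidiagonal_eq_sum_range_succ_mk]

theorem prod_Icc_add_one_eq_prod_range {M : Type*} [CommMonoid M] (f : ℕ → M) (a i : ℕ) :
    ∏ j ∈ Icc (a + 1) (a + i), f j = ∏ t ∈ range i, f (a + 1 + t) := by
  rw [← Ico_add_one_right_eq_Icc, prod_Ico_eq_prod_range, Nat.add_right_comm,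
    Nat.add_sub_cancel_left]

theorem neg_one_pow_mul_prod_Icc_add_eq_descPochhammer_eval {R : Type*} [CommRing R] (x : R)
    (k i : ℕ) :
    (-1) ^ i * ∏ j ∈ Icc (k + 1) (k + i), (x + j) =
      (descPochhammer R i).eval (-x - (k + 1)) := by
  rw [prod_Icc_add_one_eq_prod_range, descPochhammer_eval_eq_prod_range,
    show (-1 : R) ^ i = (-1) ^ #(range i) by rw [card_range], ← prod_neg]
  refine prod_congr rfl fun t _ => ?_
  push_cast
  ring

theorem prod_Icc_natCast_eq_descFactorial {R : Type*} [CommSemiring R] (k i : ℕ) :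
    ∏ j ∈ Icc (k + 1) (k + i), (j : R) = (k + i).descFactorial i := by
  rw [prod_Icc_add_one_eq_prod_range, add_descFactorial_eq_ascFactorial,
    ascFactorial_eq_prod_range]
  push_cast
  rfl

theorem prod_Icc_natCast_sub_one_sub_eq_descPochhammer_eval {R : Type*} [CommRing R] (x : R)
    (n : ℕ) :
    ∏ j ∈ Icc 1 n, ((j : R) - 1 - x) = (descPochhammer R n).eval (n - 1 - x) := by
  have h := prod_Icc_add_one_eq_prod_range (fun j : ℕ => (j : R) - 1 - x) 0 n
  simp only [zero_add] at h
  rw [h, descPochhammer_eval_eq_ascPochhammer, show (n : R) - 1 - x - n + 1 = -x by ring,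
    ascPochhammer_eval_neg_eq_descPochhammer, descPochhammer_eval_eq_prod_range,
    show (-1 : R) ^ n = (-1) ^ #(range n) by rw [card_range], ← prod_neg]
  refine prod_congr rfl fun t _ => ?_
  push_cast
  ring

theorem choose_mul_choose_mul_factorial {n k i : ℕ} (hi : i ≤ n) :
    (n + k).choose (k + i) * (k + i).choose k * n ! =
      n.choose i * ((n + k).descFactorial (n - i) * (k + i).descFactorial i) := by
  have hdesc := descFactorial_mul_descFactorial (n := n + k) (Nat.sub_le n i)
  rw [show n + k - (n - i) = k + i by omega, show n - (n - i) = i by omega] at hdesc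
  rw [choose_mul (Nat.le_add_right k i), Nat.add_sub_cancel, Nat.add_sub_cancel_left,
    mul_comm ((n + k).descFactorial _), hdesc, descFactorial_eq_factorial_mul_choose,
    Nat.choose_symm_add]
  ring

theorem prod_Icc_one_natCast_eq_factorial {R : Type*} [CommSemiring R] (n : ℕ) :
    ∏ j ∈ Icc 1 n, (j : R) = n ! := by
  simpa [descFactorial_self] using prod_Icc_natCast_eq_descFactorial (R := R) 0 n

section Field

variable {K : Type*} [Field K] [CharZero K]

theorem neg_one_pow_mul_choose_mul_choose_mul_prod_mul_factorial (x : K) {n k i : ℕ}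
    (hi : i ≤ n) :
    (-1) ^ i * (n + k).choose (k + i) * (k + i).choose k *
        (∏ j ∈ Icc (k + 1) (k + i), ((x + j) / j)) * n ! =
      n.choose i * ((descPochhammer K i).eval (-x - (k + 1)) *
        (descPochhammer K (n - i)).eval ((n + k : ℕ) : K)) := by
  have hdesc : ((k + i).descFactorial i : K) ≠ 0 :=
    Nat.cast_ne_zero.2 (descFactorial_eq_zero_iff_lt.not.2 (by omega))
  have hnat : ((n + k).choose (k + i) * (k + i).choose k * n ! : K) =
      n.choose i * ((n + k).descFactorial (n - i) * (k + i).descFactorial i) := by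
    exact_mod_cast choose_mul_choose_mul_factorial (k := k) hi
  rw [prod_div_distrib, prod_Icc_natCast_eq_descFactorial,
    ← neg_one_pow_mul_prod_Icc_add_eq_descPochhammer_eval, descPochhammer_eval_eq_descFactorial]
  field_simp
  linear_combination (∏ j ∈ Icc (k + 1) (k + i), (x + j)) * hnat

theorem sum_Icc_neg_one_pow_mul_choose_mul_choose_mul_prod (x : K) (k n : ℕ) :
    ∑ l ∈ Icc k (n + k), (-1) ^ (l - k) * (n + k).choose l * l.choose k *
        ∏ j ∈ Icc (k + 1) l, ((x + j) / j) =
      ∏ j ∈ Icc 1 n, (((j : K) - 1 - x) / j) := by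
  refine mul_right_cancel₀ (Nat.cast_ne_zero.2 n.factorial_ne_zero : (n ! : K) ≠ 0) ?_
  rw [prod_div_distrib, prod_Icc_one_natCast_eq_factorial,
    div_mul_cancel₀ _ (by exact_mod_cast n.factorial_ne_zero),
    prod_Icc_natCast_sub_one_sub_eq_descPochhammer_eval, sum_mul, ← Ico_add_one_right_eq_Icc,
    sum_Ico_eq_sum_range, show n + k + 1 - k = n + 1 by omega]
  simp only [Nat.add_sub_cancel_left]
  rw [sum_congr rfl fun i hi => neg_one_pow_mul_choose_mul_choose_mul_prod_mul_factorial x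
    (k := k) (Nat.lt_succ_iff.1 (mem_range.1 hi)), ← descPochhammer_eval_add]
  congr 1
  push_cast
  ring

end Field

/-- **Lemma 3.3 specialized at `q = 1/(κ-1)`** (as used in the proof of Lemma 3.4).
For `κ ≠ 1` and `k ≤ m ≤ N`,
`∑_{l=k}^{N} (-1)^{l-k} C(N-m+k, l) C(l, k) ∏_{j=k+1}^{l} ((j(κ-1)+1)/(j(κ-1)))
  = ∏_{j=1}^{N-m} ((j(κ-1)-κ)/(j(κ-1)))`. -/
theorem stmt1 (κ : ℂ) (hκ : κ ≠ 1) (N m k : ℕ) (hk : k ≤ m) (hm : m ≤ N) :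
    ∑ l ∈ Finset.Icc k N, (-1 : ℂ) ^ (l - k) * (Nat.choose (N - m + k) l : ℂ) *
        (Nat.choose l k : ℂ) *
        ∏ j ∈ Finset.Icc (k + 1) l, (((j : ℂ) * (κ - 1) + 1) / ((j : ℂ) * (κ - 1)))
      = ∏ j ∈ Finset.Icc 1 (N - m), (((j : ℂ) * (κ - 1) - κ) / ((j : ℂ) * (κ - 1))) := by
  have hc : κ - 1 ≠ 0 := sub_ne_zero.2 hκ
  have hnum (j : ℕ) : ((j : ℂ) * (κ - 1) + 1) / (j * (κ - 1)) = ((κ - 1)⁻¹ + j) / j := by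
    rw [div_mul_eq_div_div_swap]
    field_simp
    ring
  have hden (j : ℕ) :
      ((j : ℂ) * (κ - 1) - κ) / (j * (κ - 1)) = (j - 1 - (κ - 1)⁻¹) / j := by
    rw [div_mul_eq_div_div_swap]
    field_simp
    ring
  simp only [hnum, hden]
  rw [← sum_Icc_neg_one_pow_mul_choose_mul_choose_mul_prod]
  refine (sum_subset (Icc_subset_Icc_right (by omega)) fun l hl hl' => ?_).symm
  rw [Nat.choose_eq_zero_of_lt (by simp only [mem_Icc] at hl hl'; omega)]
  simp
end

section
/- Let R be a (possibly noncommutative) ring, X_0, X_1, …, X_N ∈ R, and let l, m be natural numbers with 0 ≤ l ≤ N and 1 ≤ m ≤ N. Then ∑_{S} e_m(X_0, …, X_0 (l copies), X_{i_1}, …, X_{i_{N-l}}) = ∑_{k=0}^{min(l,m)} C(l, k) · C(N-m+k, l) · e_{m-k}(X_1, …, X_N) · X_0^k, where the outer sum on the left runs over all subsets S = {i_1 < i_2 < … < i_{N-l}} of {1, …, N} of size N - l, and e_m is applied to the list of length N whose first l entries are X_0 and whose remaining entries are X_{i_1}, …, X_{i_{N-l}} in increasing order of index. (This is the key counting identity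 established in the proof of Lemma 3.4 of the paper.) -/
/-!
The `l` copies of `X₀` come last in every monomial, so splitting them off gives
`e_m(X₀, …, X₀, L) = ∑_k C(l, k) e_{m-k}(L) X₀^k`. Summing `e_j` over all subsequences of
length `c` of a list of length `n` counts every `j`-subsequence once for each choice of the
`n - c` omitted entries among the `n - j` entries outside it, that is `C(n - j, n - c)` times;
for `n = N`, `c = N - l`, `j = m - k` this is `C(N - m + k, l)`.
-/

/-- The `m`-th noncommutative elementary symmetric polynomial of the list
`[X_1, …, X_n]`: the sum over `n ≥ i_1 > i_2 > … > i_m ≥ 1` of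
`X_{i_1} X_{i_2} ⋯ X_{i_m}` (factors in strictly decreasing order of index),
with `e_0 = 1`. -/
def ncE {R : Type*} [Ring R] : ℕ → List R → R
  | 0, _ => 1
  | _ + 1, [] => 0
  | m + 1, x :: xs => ncE (m + 1) xs + ncE m xs * x

theorem List.sublistsLen_map {α β : Type*} (f : α → β) (c : ℕ) (l : List α) :
    (l.map f).sublistsLen c = (l.sublistsLen c).map (List.map f) := by
  induction l generalizing c with
  | nil => cases c <;> simp
  | cons x l ih =>
    cases c with
    | zero => simp
    | succ c => simp [List.sublistsLen_succ_cons, ih, Function.comp_def]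

theorem Finset.sum_powersetCard_sort {α M : Type*} [LinearOrder α] [AddCommMonoid M]
    (l : List α) (hl : l.SortedLT) (c : ℕ) (f : List α → M) :
    ∑ S ∈ l.toFinset.powersetCard c, f (S.sort (· ≤ ·)) = ((l.sublistsLen c).map f).sum := by
  have hle : l.Pairwise (· ≤ ·) := hl.pairwise.imp le_of_lt
  rw [← List.sum_toFinset _ (List.nodup_sublistsLen c hl.nodup)]
  refine Finset.sum_nbij' (fun S => S.sort (· ≤ ·)) List.toFinset ?_ ?_ ?_ ?_ fun _ _ => rfl
  · intro S hS
    obtain ⟨hSl, hcard⟩ := Finset.mem_powersetCard.1 hS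
    refine List.mem_toFinset.2 (List.mem_sublistsLen.2 ⟨?_, by simp [hcard]⟩)
    refine List.sublist_of_subperm_of_pairwise ?_ (Finset.pairwise_sort _ _) hle
    exact (Finset.sort_nodup _ _).subperm fun a ha =>
      List.mem_toFinset.1 (hSl ((Finset.mem_sort _).1 ha))
  · intro T hT
    obtain ⟨hTl, rfl⟩ := List.mem_sublistsLen.1 (List.mem_toFinset.1 hT)
    exact Finset.mem_powersetCard.2
      ⟨fun a ha => List.mem_toFinset.2 (hTl.subset (List.mem_toFinset.1 ha)),
        List.toFinset_card_of_nodup (hTl.nodup hl.nodup)⟩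
  · intro S _
    exact Finset.sort_toFinset _ _
  · intro T hT
    obtain ⟨hTl, -⟩ := List.mem_sublistsLen.1 (List.mem_toFinset.1 hT)
    exact (List.toFinset_sort _ (hTl.nodup hl.nodup)).2 (hle.sublist hTl)

namespace ncE

variable {R : Type*} [Ring R]

@[simp]
theorem zero_left (L : List R) : ncE 0 L = 1 := by cases L <;> rfl

theorem succ_cons (m : ℕ) (x : R) (L : List R) :
    ncE (m + 1) (x :: L) = ncE (m + 1) L + ncE m L * x := rfl

@[simp]
theorem succ_nil (m : ℕ) : ncE (m + 1) ([] : List R) = 0 := rfl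

theorem eq_zero_of_length_lt {m : ℕ} {L : List R} (h : L.length < m) : ncE m L = 0 := by
  induction L generalizing m with
  | nil => cases m with
    | zero => simp at h
    | succ m => rfl
  | cons x L ih => cases m with
    | zero => simp at h
    | succ m =>
      simp only [List.length_cons] at h
      rw [succ_cons, ih (by omega), ih (by omega), zero_mul, add_zero]

theorem replicate_append (x : R) (l m : ℕ) (L : List R) :
    ncE m (List.replicate l x ++ L)
      = ∑ k ∈ Finset.range (m + 1), l.choose k • (ncE (m - k) L * x ^ k) := by
  induction l generalizing m with
  | zero => simp [Finset.sum_range_succ', Nat.choose_zero_succ]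
  | succ l ih =>
    cases m with
    | zero => simp
    | succ m =>
      rw [List.replicate_succ, List.cons_append, succ_cons, ih, ih, Finset.sum_mul,
        Finset.sum_range_succ' _ (m + 1), Finset.sum_range_succ' _ (m + 1), add_right_comm,
        ← Finset.sum_add_distrib]
      congr 1
      · refine Finset.sum_congr rfl fun k _ => ?_
        rw [Nat.choose_succ_succ', add_smul, smul_mul_assoc, mul_assoc, ← pow_succ,
          Nat.add_sub_add_right, add_comm]
      · simp

/-- Pascal's rule; it fails for the truncated differences when `L.length ≤ j`,
but then `ncE (j + 1) L = 0`. -/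
theorem choose_add_choose_smul_succ (L : List R) (j d : ℕ) :
    ((L.length - (j + 1)).choose d + (L.length - (j + 1)).choose (d + 1)) • ncE (j + 1) L
      = (L.length - j).choose (d + 1) • ncE (j + 1) L := by
  rcases lt_or_ge L.length (j + 1) with h | h
  · simp [eq_zero_of_length_lt h]
  · rw [show L.length - j = L.length - (j + 1) + 1 by omega, Nat.choose_succ_succ']

theorem sum_sublistsLen_of_lt (L : List R) {c j : ℕ} (h : c < j) :
    ((L.sublistsLen c).map (ncE j)).sum = 0 :=
  List.sum_eq_zero fun _ hy => by
    obtain ⟨T, hT, rfl⟩ := List.mem_map.1 hy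
    exact eq_zero_of_length_lt ((List.mem_sublistsLen.1 hT).2 ▸ h)

theorem sum_sublistsLen_add (L : List R) (j d : ℕ) :
    ((L.sublistsLen (j + d)).map (ncE j)).sum = (L.length - j).choose d • ncE j L := by
  induction L generalizing j d with
  | nil => cases j <;> cases d <;> simp [List.sublistsLen_succ_nil, ← add_assoc]
  | cons x L ih =>
    cases j with
    | zero =>
      have hone : ncE 0 = fun _ : List R => (1 : R) := funext zero_left
      simp [hone, List.length_sublistsLen]
    | succ j =>
      have hcons : ∀ c, (((x :: L).sublistsLen (c + 1)).map (ncE (j + 1))).sum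
          = ((L.sublistsLen (c + 1)).map (ncE (j + 1))).sum
            + ((L.sublistsLen c).map (ncE (j + 1))).sum
            + ((L.sublistsLen c).map (ncE j)).sum * x := by
        intro c
        simp only [List.sublistsLen_succ_cons, List.map_append, List.sum_append, List.map_map,
          Function.comp_def, succ_cons, List.sum_map_add, List.sum_map_mul_right, add_assoc]
      rw [show j + 1 + d = j + d + 1 by omega, hcons, ih j d, show j + d + 1 = j + 1 + d by omega,
        ih (j + 1) d, List.length_cons, Nat.add_sub_add_right, succ_cons, smul_add, smul_mul_assoc]
      cases d with
      | zero => simp [sum_sublistsLen_of_lt L (Nat.lt_succ_self j)]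
      | succ d =>
        rw [show j + (d + 1) = j + 1 + d by omega, ih (j + 1) d, ← add_smul,
          add_comm (Nat.choose _ _), choose_add_choose_smul_succ]

theorem sum_sublistsLen (L : List R) (j : ℕ) {c : ℕ} (hc : c ≤ L.length) :
    ((L.sublistsLen c).map (ncE j)).sum = (L.length - j).choose (L.length - c) • ncE j L := by
  rcases le_or_gt j c with hjc | hcj
  · obtain ⟨d, rfl⟩ := Nat.exists_eq_add_of_le hjc
    rw [sum_sublistsLen_add,
      Nat.choose_symm_of_eq_add (by omega : L.length - j = d + (L.length - (j + d)))]
  · rw [sum_sublistsLen_of_lt L hcj]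
    rcases le_or_gt j L.length with hj | hj
    · rw [Nat.choose_eq_zero_of_lt (by omega : L.length - j < L.length - c), zero_smul]
    · rw [eq_zero_of_length_lt hj, smul_zero]

theorem sum_powersetCard_sort_map {N : ℕ} (X : Fin N → R) (j : ℕ) {c : ℕ} (hc : c ≤ N) :
    ∑ S ∈ (Finset.univ : Finset (Fin N)).powersetCard c, ncE j ((S.sort (· ≤ ·)).map X)
      = (N - j).choose (N - c) • ncE j (List.ofFn X) := by
  rw [← List.toFinset_finRange,
    Finset.sum_powersetCard_sort _ (List.sortedLT_finRange N) c (fun T => ncE j (T.map X)),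
    ← Function.comp_def (ncE j) (List.map X), ← List.map_map, ← List.sublistsLen_map,
    ← List.ofFn_eq_map, sum_sublistsLen _ _ (by simpa using hc), List.length_ofFn]

end ncE

theorem stmt3_general {R : Type*} [Ring R] (N : ℕ) (X₀ : R) (X : Fin N → R) (l m : ℕ)
    (hl : l ≤ N) (hm : m ≤ N) :
    ∑ S ∈ (Finset.univ : Finset (Fin N)).powersetCard (N - l),
        ncE m (List.replicate l X₀ ++ (S.sort (· ≤ ·)).map X)
      = ∑ k ∈ Finset.range (min l m + 1),
          (Nat.choose l k * Nat.choose (N - m + k) l) •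
            (ncE (m - k) (List.ofFn X) * X₀ ^ k) := by
  calc _ = ∑ k ∈ Finset.range (m + 1), l.choose k •
          ((∑ S ∈ (Finset.univ : Finset (Fin N)).powersetCard (N - l),
            ncE (m - k) ((S.sort (· ≤ ·)).map X)) * X₀ ^ k) := by
        simp only [ncE.replicate_append, Finset.sum_mul, Finset.smul_sum]
        exact Finset.sum_comm
    _ = ∑ k ∈ Finset.range (m + 1), (l.choose k * (N - m + k).choose l) •
          (ncE (m - k) (List.ofFn X) * X₀ ^ k) := by
        refine Finset.sum_congr rfl fun k _ => ?_
        rw [ncE.sum_powersetCard_sort_map X _ (Nat.sub_le N l), Nat.sub_sub_self hl,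
          show N - (m - k) = N - m + k by grind, smul_mul_assoc, smul_smul]
    _ = _ := by
        refine (Finset.sum_subset (Finset.range_subset_range.2 (by omega)) fun k hk hk' => ?_).symm
        simp only [Finset.mem_range] at hk hk'
        rw [Nat.choose_eq_zero_of_lt (by omega : l < k), zero_mul, zero_smul]

/-- The counting identity from the proof of Lemma 3.4: for `l ≤ N`, `1 ≤ m ≤ N`,
`∑_{S ⊆ {1,…,N}, |S| = N-l} e_m(X_0,…,X_0 (l copies), X_{i_1}, …, X_{i_{N-l}})
  = ∑_{k=0}^{min(l,m)} C(l,k) C(N-m+k,l) e_{m-k}(X_1,…,X_N) X_0^k`. -/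
theorem stmt3 {R : Type*} [Ring R] (N : ℕ) (X₀ : R) (X : Fin N → R) (l m : ℕ)
    (hl : l ≤ N) (hm1 : 1 ≤ m) (hm : m ≤ N) :
    ∑ S ∈ (Finset.univ : Finset (Fin N)).powersetCard (N - l),
        ncE m (List.replicate l X₀ ++ (S.sort (· ≤ ·)).map X)
      = ∑ k ∈ Finset.range (min l m + 1),
          (Nat.choose l k * Nat.choose (N - m + k) l) •
            (ncE (m - k) (List.ofFn X) * X₀ ^ k) :=
  stmt3_general N X₀ X l m hl hm
end
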